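/- Chaining of approximate channels: for CPTP maps M_i, N_i : A_i → A_{i+1} (i = 1,…,k) and a state Ω on A_1, ‖M_k∘⋯∘M_1 - N_k∘⋯∘N_1‖_Ω ≤ Σ_{i=1}^k ‖M_i - N_i‖_{(M_{i-1}∘⋯∘M_1)(Ω)}. -/

import Mathlib

open scoped Matrix Kronecker ComplexOrder

noncomputable section

noncomputable def traceNorm {n : Type*} [Fintype n] [DecidableEq n] (A : Matrix n n ℂ) : ℝ :=
  (((Matrix.posSemidef_conjTranspose_mul_self A).1.eigenvectorUnitary.1 *
      Matrix.diagonal (((↑) : ℝ → ℂ) ∘ (√·) ∘ (Matrix.posSemidef_conjTranspose_mul_self A).1.eigenvalues) *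
      (star (Matrix.posSemidef_conjTranspose_mul_self A).1.eigenvectorUnitary : Matrix n n ℂ)).trace).re

noncomputable def vnEntropy {n : Type*} [Fintype n] [DecidableEq n] (ρ : Matrix n n ℂ) : ℝ :=
  if h : ρ.IsHermitian then -∑ i, (h.eigenvalues i * Real.log (h.eigenvalues i)) else 0

def ptraceL {a b : Type*} [Fintype a] (M : Matrix (a × b) (a × b) ℂ) : Matrix b b ℂ :=
  Matrix.of fun i j => ∑ k : a, M (k, i) (k, j)

def ptraceR {a b : Type*} [Fintype b] (M : Matrix (a × b) (a × b) ℂ) : Matrix a a ℂ :=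
  Matrix.of fun i j => ∑ k : b, M (i, k) (j, k)

def ptrace3M {a b c : Type*} [Fintype b] (M : Matrix (a × b × c) (a × b × c) ℂ) :
    Matrix (a × c) (a × c) ℂ :=
  Matrix.of fun i j => ∑ k : b, M (i.1, k, i.2) (j.1, k, j.2)

open scoped Classical in
noncomputable def msqrt {n : Type*} [Fintype n] [DecidableEq n] (A : Matrix n n ℂ) :
    Matrix n n ℂ :=
  if h : A.PosSemidef then
    h.1.eigenvectorUnitary.1 * Matrix.diagonal ((↑) ∘ (√·) ∘ h.1.eigenvalues) *
      (star h.1.eigenvectorUnitary : Matrix n n ℂ)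
  else 0

noncomputable def fidelity {n : Type*} [Fintype n] [DecidableEq n] (ρ σ : Matrix n n ℂ) : ℝ :=
  (((msqrt (msqrt σ * ρ * msqrt σ)).trace).re) ^ 2

def outer {n : Type*} (v : n → ℂ) : Matrix n n ℂ :=
  Matrix.of fun i j => v i * (starRingEnd ℂ) (v j)

def krausApply {ι a b : Type*} [Fintype ι] [Fintype a]
    (K : ι → Matrix b a ℂ) (ρ : Matrix a a ℂ) : Matrix b b ℂ :=
  ∑ i, K i * ρ * (K i)ᴴ

noncomputable def cdist {i k a b : Type*} [Fintype i] [Fintype k] [Fintype a] [DecidableEq a]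
    [Fintype b] [DecidableEq b]
    (K : i -> Matrix b a Complex) (L : k -> Matrix b a Complex) (w : Matrix a a Complex) : Real :=
  sSup {r | exists (m : Nat) (x : Matrix (Fin m × a) (Fin m × a) Complex),
    x.PosSemidef ∧ x.trace = 1 ∧ ptraceL x = w ∧
    r = traceNorm (krausApply (fun j => (1 : Matrix (Fin m) (Fin m) Complex) ⊗ₖ K j) x
          - krausApply (fun j => (1 : Matrix (Fin m) (Fin m) Complex) ⊗ₖ L j) x)}

def iterApp (d c : ℕ → ℕ)
    (K : ∀ i, Fin (c i) → Matrix (Fin (d (i+1))) (Fin (d i)) ℂ) :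
    ∀ k, Matrix (Fin (d 0)) (Fin (d 0)) ℂ → Matrix (Fin (d k)) (Fin (d k)) ℂ
  | 0 => fun ρ => ρ
  | (k+1) => fun ρ => krausApply (K k) (iterApp d c K k ρ)

def iterExt (m : ℕ) (d c : ℕ → ℕ)
    (K : ∀ i, Fin (c i) → Matrix (Fin (d (i+1))) (Fin (d i)) ℂ) :
    ∀ k, Matrix (Fin m × Fin (d 0)) (Fin m × Fin (d 0)) ℂ →
      Matrix (Fin m × Fin (d k)) (Fin m × Fin (d k)) ℂ
  | 0 => fun ξ => ξ
  | (k+1) => fun ξ =>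
      krausApply (fun j => (1 : Matrix (Fin m) (Fin m) ℂ) ⊗ₖ K k j) (iterExt m d c K k ξ)

/-!
Hybrid argument: writing `Mᵏ` for `id ⊗ M_{k-1} ∘ ⋯ ∘ id ⊗ M_0`,
`Mᵏ⁺¹ ξ - Nᵏ⁺¹ ξ = (Mₖ - Nₖ)(Mᵏ ξ) + Nₖ (Mᵏ ξ - Nᵏ ξ)`.
Since the partial trace commutes with `id ⊗ M`, `Mᵏ ξ` extends the state `Mᵏ Ω`, so the first
term is bounded by `‖Mₖ - Nₖ‖_{Mᵏ Ω}`; the second is bounded by induction because channels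
contract the trace norm of Hermitian matrices. Both this contraction and the triangle inequality
come from the Jordan decomposition `X = X⁺ - X⁻`, `‖X‖₁ = tr X⁺ + tr X⁻`, together with
`‖P - Q‖₁ ≤ tr P + tr Q` for `P, Q ≥ 0`.
-/

open Matrix
open scoped MatrixOrder

section TraceNorm

variable {n : Type*} [Fintype n] [DecidableEq n]

lemma traceNorm_eq_re_trace_cfcAbs (A : Matrix n n ℂ) : traceNorm A = (CFC.abs A).trace.re := by
  have hA := posSemidef_conjTranspose_mul_self A
  rw [CFC.abs, star_eq_conjTranspose, CFC.sqrt_eq_real_sqrt _ hA.nonneg,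
    cfcₙ_eq_cfc (hf0 := Real.sqrt_zero), hA.1.cfc_eq]
  rfl

lemma traceNorm_nonneg (A : Matrix n n ℂ) : 0 ≤ traceNorm A := by
  rw [traceNorm_eq_re_trace_cfcAbs]
  exact (Complex.nonneg_iff.mp (nonneg_iff_posSemidef.mp (CFC.abs_nonneg A)).trace_nonneg).1

@[simp]
lemma traceNorm_zero : traceNorm (0 : Matrix n n ℂ) = 0 := by
  simp [traceNorm_eq_re_trace_cfcAbs]

lemma Matrix.IsHermitian.traceNorm_eq {X : Matrix n n ℂ} (hX : X.IsHermitian) :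
    traceNorm X = (X⁺).trace.re + (X⁻).trace.re := by
  rw [traceNorm_eq_re_trace_cfcAbs, ← CFC.posPart_add_negPart X hX, trace_add, Complex.add_re]

lemma Matrix.PosSemidef.re_trace_mul_nonneg {A B : Matrix n n ℂ} (hA : A.PosSemidef)
    (hB : B.PosSemidef) : 0 ≤ (A * B).trace.re := by
  have hS := nonneg_iff_posSemidef.mp (CFC.sqrt_nonneg A)
  have h : (A * B).trace = (CFC.sqrt A * B * (CFC.sqrt A)ᴴ).trace := by
    rw [hS.1.eq, trace_mul_comm (CFC.sqrt A * B), ← mul_assoc,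
      CFC.sqrt_mul_sqrt_self A hA.nonneg]
  rw [h]
  exact (Complex.nonneg_iff.mp (hB.mul_mul_conjTranspose_same _).trace_nonneg).1

/-- With `C` the sign of `P - Q`, `‖P - Q‖₁ = tr (C P) - tr (C Q)`, and `-1 ≤ C ≤ 1` bounds
`tr (C P) ≤ tr P` and `-tr (C Q) ≤ tr Q`. -/
lemma traceNorm_sub_le {P Q : Matrix n n ℂ} (hP : P.PosSemidef) (hQ : Q.PosSemidef) :
    traceNorm (P - Q) ≤ P.trace.re + Q.trace.re := by
  set X := P - Q
  have hX : IsSelfAdjoint X := hP.1.sub hQ.1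
  let s : ℝ → ℝ := fun x => if 0 ≤ x then 1 else -1
  have hs : ContinuousOn s (spectrum ℝ X) := X.finite_real_spectrum.continuousOn _
  set C := cfc s X
  have hCX : C * X = CFC.abs X := by
    have hmul : cfc (fun x => s x * x) X = C * X := by rw [cfc_mul .., cfc_id' ℝ X]
    rw [CFC.abs_eq_cfc_norm X, ← hmul]
    refine cfc_congr fun x _ => ?_
    by_cases h : 0 ≤ x
    · simp [s, h, abs_of_nonneg h]
    · simp [s, h, abs_of_neg (not_le.mp h)]
  have hCP : 0 ≤ ((1 - C) * P).trace.re := by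
    refine PosSemidef.re_trace_mul_nonneg (nonneg_iff_posSemidef.mp ?_) hP
    rw [← cfc_one ℝ X, ← cfc_sub ..]
    exact cfc_nonneg fun x _ => by by_cases h : 0 ≤ x <;> simp [s, h]
  have hCQ : 0 ≤ ((1 + C) * Q).trace.re := by
    refine PosSemidef.re_trace_mul_nonneg (nonneg_iff_posSemidef.mp ?_) hQ
    rw [← cfc_one ℝ X, ← cfc_add ..]
    exact cfc_nonneg fun x _ => by by_cases h : 0 ≤ x <;> simp [s, h]
  rw [traceNorm_eq_re_trace_cfcAbs, ← hCX]
  simp only [X, sub_mul, add_mul, mul_sub, one_mul, trace_sub, trace_add, Complex.sub_re,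
    Complex.add_re] at hCP hCQ ⊢
  linarith

lemma traceNorm_add_le {X Y : Matrix n n ℂ} (hX : X.IsHermitian) (hY : Y.IsHermitian) :
    traceNorm (X + Y) ≤ traceNorm X + traceNorm Y := by
  have hXY : X + Y = (X⁺ + Y⁺) - (X⁻ + Y⁻) := by
    conv_lhs => rw [← CFC.posPart_sub_negPart X hX, ← CFC.posPart_sub_negPart Y hY]
    abel
  have hpos := (nonneg_iff_posSemidef.mp (CFC.posPart_nonneg X)).add
    (nonneg_iff_posSemidef.mp (CFC.posPart_nonneg Y))
  have hneg := (nonneg_iff_posSemidef.mp (CFC.negPart_nonneg X)).add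
    (nonneg_iff_posSemidef.mp (CFC.negPart_nonneg Y))
  rw [hXY, hX.traceNorm_eq, hY.traceNorm_eq]
  refine (traceNorm_sub_le hpos hneg).trans_eq ?_
  simp only [trace_add, Complex.add_re]
  ring

end TraceNorm

section Kraus

variable {ι a b : Type*} [Fintype ι] [Fintype a]

lemma krausApply_sub (K : ι → Matrix b a ℂ) (A B : Matrix a a ℂ) :
    krausApply K (A - B) = krausApply K A - krausApply K B := by
  simp only [krausApply, Matrix.mul_sub, Matrix.sub_mul, Finset.sum_sub_distrib]

lemma Matrix.IsHermitian.krausApply (K : ι → Matrix b a ℂ) {X : Matrix a a ℂ}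
    (hX : X.IsHermitian) : (krausApply K X).IsHermitian :=
  isSelfAdjoint_sum _ fun j _ => isHermitian_mul_mul_conjTranspose (K j) hX

lemma Matrix.PosSemidef.krausApply [Fintype b] (K : ι → Matrix b a ℂ) {ρ : Matrix a a ℂ}
    (hρ : ρ.PosSemidef) : (krausApply K ρ).PosSemidef :=
  posSemidef_sum _ fun j _ => hρ.mul_mul_conjTranspose_same (K j)

lemma trace_krausApply [Fintype b] [DecidableEq a] {K : ι → Matrix b a ℂ}
    (hK : ∑ j, (K j)ᴴ * K j = 1) (ρ : Matrix a a ℂ) : (krausApply K ρ).trace = ρ.trace := by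
  simp only [krausApply, trace_sum]
  simp_rw [trace_mul_cycle _ ρ, ← trace_sum, ← Finset.sum_mul, hK, one_mul]

lemma traceNorm_krausApply_le [Fintype b] [DecidableEq a] [DecidableEq b]
    {K : ι → Matrix b a ℂ} (hK : ∑ j, (K j)ᴴ * K j = 1) {X : Matrix a a ℂ}
    (hX : X.IsHermitian) : traceNorm (krausApply K X) ≤ traceNorm X := by
  have hpos := nonneg_iff_posSemidef.mp (CFC.posPart_nonneg X)
  have hneg := nonneg_iff_posSemidef.mp (CFC.negPart_nonneg X)
  calc traceNorm (krausApply K X) = traceNorm (krausApply K X⁺ - krausApply K X⁻) := by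
        rw [← krausApply_sub, CFC.posPart_sub_negPart X hX]
    _ ≤ (krausApply K X⁺).trace.re + (krausApply K X⁻).trace.re :=
        traceNorm_sub_le (hpos.krausApply K) (hneg.krausApply K)
    _ = traceNorm X := by rw [trace_krausApply hK, trace_krausApply hK, hX.traceNorm_eq]

lemma traceNorm_krausApply_sub_krausApply_le {κ : Type*} [Fintype κ] [Fintype b]
    [DecidableEq a] [DecidableEq b] {K : ι → Matrix b a ℂ} {L : κ → Matrix b a ℂ}
    (hK : ∑ j, (K j)ᴴ * K j = 1) (hL : ∑ j, (L j)ᴴ * L j = 1) {ρ : Matrix a a ℂ}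
    (hρ : ρ.PosSemidef) : traceNorm (krausApply K ρ - krausApply L ρ) ≤ 2 * ρ.trace.re := by
  refine (traceNorm_sub_le (hρ.krausApply K) (hρ.krausApply L)).trans_eq ?_
  rw [trace_krausApply hK, trace_krausApply hL]
  ring

omit [Fintype a] in
lemma sum_one_kronecker_conjTranspose_mul {c : Type*} [Fintype b] [DecidableEq a] [Fintype c]
    [DecidableEq c] {K : ι → Matrix b a ℂ} (hK : ∑ j, (K j)ᴴ * K j = 1) :
    ∑ j, ((1 : Matrix c c ℂ) ⊗ₖ K j)ᴴ * ((1 : Matrix c c ℂ) ⊗ₖ K j) = 1 := by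
  simp_rw [conjTranspose_kronecker, ← mul_kronecker_mul, conjTranspose_one, one_mul]
  rw [← one_kronecker_one, ← hK]
  exact (map_sum (kroneckerBilinear (R := ℂ) (1 : Matrix c c ℂ)) _ _).symm

omit [Fintype ι] in
lemma ptraceL_sum (s : Finset ι) (f : ι → Matrix (a × b) (a × b) ℂ) :
    ptraceL (∑ j ∈ s, f j) = ∑ j ∈ s, ptraceL (f j) := by
  ext i j
  simp only [ptraceL, of_apply, Matrix.sum_apply]
  exact Finset.sum_comm

lemma ptraceL_one_kronecker_mul_mul_conjTranspose {c : Type*} [Fintype b] [Fintype c]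
    [DecidableEq c] (K : Matrix b a ℂ) (x : Matrix (c × a) (c × a) ℂ) :
    ptraceL ((1 : Matrix c c ℂ) ⊗ₖ K * x * ((1 : Matrix c c ℂ) ⊗ₖ K)ᴴ) = K * ptraceL x * Kᴴ := by
  ext i j
  simp only [ptraceL, of_apply, mul_apply, conjTranspose_apply, kroneckerMap_apply, one_apply,
    ite_mul, one_mul, zero_mul, mul_ite, mul_zero, RCLike.star_def, apply_ite (starRingEnd ℂ),
    map_zero, Fintype.sum_prod_type, Finset.sum_ite_irrel, Finset.sum_const_zero,
    Finset.sum_ite_eq, Finset.mem_univ, ↓reduceIte, Finset.sum_mul, Finset.mul_sum]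
  rw [Finset.sum_comm]
  exact Finset.sum_congr rfl fun _ _ => Finset.sum_comm

lemma ptraceL_krausApply_one_kronecker {c : Type*} [Fintype b] [Fintype c] [DecidableEq c]
    (K : ι → Matrix b a ℂ) (x : Matrix (c × a) (c × a) ℂ) :
    ptraceL (krausApply (fun j => (1 : Matrix c c ℂ) ⊗ₖ K j) x) = krausApply K (ptraceL x) := by
  simp only [krausApply, ptraceL_sum, ptraceL_one_kronecker_mul_mul_conjTranspose]

end Kraus

lemma cdist_nonneg {ι κ a b : Type*} [Fintype ι] [Fintype κ] [Fintype a] [DecidableEq a]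
    [Fintype b] [DecidableEq b] (K : ι → Matrix b a ℂ) (L : κ → Matrix b a ℂ)
    (w : Matrix a a ℂ) : 0 ≤ cdist K L w :=
  Real.sSup_nonneg <| by
    rintro _ ⟨_, _, -, -, -, rfl⟩
    exact traceNorm_nonneg _

lemma traceNorm_le_cdist {ι κ a b : Type*} [Fintype ι] [Fintype κ] [Fintype a] [DecidableEq a]
    [Fintype b] [DecidableEq b] {K : ι → Matrix b a ℂ} {L : κ → Matrix b a ℂ}
    (hK : ∑ j, (K j)ᴴ * K j = 1) (hL : ∑ j, (L j)ᴴ * L j = 1) {m : ℕ}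
    {x : Matrix (Fin m × a) (Fin m × a) ℂ} (hx : x.PosSemidef) (hx1 : x.trace = 1) :
    traceNorm (krausApply (fun j => (1 : Matrix (Fin m) (Fin m) ℂ) ⊗ₖ K j) x
        - krausApply (fun j => (1 : Matrix (Fin m) (Fin m) ℂ) ⊗ₖ L j) x)
      ≤ cdist K L (ptraceL x) := by
  refine le_csSup ⟨2, ?_⟩ ⟨m, x, hx, hx1, rfl, rfl⟩
  rintro _ ⟨_, y, hy, hy1, -, rfl⟩
  simpa [hy1] using traceNorm_krausApply_sub_krausApply_le
    (sum_one_kronecker_conjTranspose_mul hK) (sum_one_kronecker_conjTranspose_mul hL) hy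

section Iterate

variable {m : ℕ} {d c : ℕ → ℕ} {K : ∀ i, Fin (c i) → Matrix (Fin (d (i+1))) (Fin (d i)) ℂ}

lemma Matrix.PosSemidef.iterExt {ξ : Matrix (Fin m × Fin (d 0)) (Fin m × Fin (d 0)) ℂ}
    (hξ : ξ.PosSemidef) (k : ℕ) : (iterExt m d c K k ξ).PosSemidef := by
  induction k with
  | zero => exact hξ
  | succ k ih => exact ih.krausApply _

lemma trace_iterExt (hK : ∀ i, ∑ j, (K i j)ᴴ * K i j = 1)
    (ξ : Matrix (Fin m × Fin (d 0)) (Fin m × Fin (d 0)) ℂ) (k : ℕ) :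
    (iterExt m d c K k ξ).trace = ξ.trace := by
  induction k with
  | zero => rfl
  | succ k ih => rw [iterExt, trace_krausApply (sum_one_kronecker_conjTranspose_mul (hK k)), ih]

lemma ptraceL_iterExt (ξ : Matrix (Fin m × Fin (d 0)) (Fin m × Fin (d 0)) ℂ) (k : ℕ) :
    ptraceL (iterExt m d c K k ξ) = iterApp d c K k (ptraceL ξ) := by
  induction k with
  | zero => rfl
  | succ k ih => rw [iterExt, ptraceL_krausApply_one_kronecker, ih, iterApp]

end Iterate

lemma traceNorm_iterExt_sub_le {m : ℕ} {d cM cN : ℕ → ℕ}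
    {M : ∀ i, Fin (cM i) → Matrix (Fin (d (i+1))) (Fin (d i)) ℂ}
    {N : ∀ i, Fin (cN i) → Matrix (Fin (d (i+1))) (Fin (d i)) ℂ}
    (hM : ∀ i, ∑ j, (M i j)ᴴ * M i j = 1) (hN : ∀ i, ∑ j, (N i j)ᴴ * N i j = 1)
    {ξ : Matrix (Fin m × Fin (d 0)) (Fin m × Fin (d 0)) ℂ} (hξ : ξ.PosSemidef)
    (hξ1 : ξ.trace = 1) (k : ℕ) :
    traceNorm (iterExt m d cM M k ξ - iterExt m d cN N k ξ)
      ≤ ∑ i ∈ Finset.range k, cdist (M i) (N i) (iterApp d cM M i (ptraceL ξ)) := by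
  induction k with
  | zero => simp [iterExt]
  | succ k ih =>
    set A := iterExt m d cM M k ξ
    set B := iterExt m d cN N k ξ
    set ΦM := krausApply (fun j => (1 : Matrix (Fin m) (Fin m) ℂ) ⊗ₖ M k j)
    set ΦN := krausApply (fun j => (1 : Matrix (Fin m) (Fin m) ℂ) ⊗ₖ N k j)
    have hA : A.PosSemidef := hξ.iterExt k
    have hB : B.PosSemidef := hξ.iterExt k
    have hA1 : A.trace = 1 := by rw [trace_iterExt hM, hξ1]
    calc traceNorm (iterExt m d cM M (k + 1) ξ - iterExt m d cN N (k + 1) ξ)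
        = traceNorm ((ΦM A - ΦN A) + ΦN (A - B)) := by
          rw [show ΦN (A - B) = ΦN A - ΦN B from krausApply_sub _ _ _, sub_add_sub_cancel]
          rfl
      _ ≤ traceNorm (ΦM A - ΦN A) + traceNorm (ΦN (A - B)) :=
          traceNorm_add_le ((hA.1.krausApply _).sub (hA.1.krausApply _))
            ((hA.1.sub hB.1).krausApply _)
      _ ≤ cdist (M k) (N k) (iterApp d cM M k (ptraceL ξ)) + traceNorm (A - B) := by
          gcongr
          · rw [← ptraceL_iterExt]
            exact traceNorm_le_cdist (hM k) (hN k) hA hA1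
          · exact traceNorm_krausApply_le (sum_one_kronecker_conjTranspose_mul (hN k))
              (hA.1.sub hB.1)
      _ ≤ _ := by
          rw [Finset.sum_range_succ]
          linarith

theorem cdist_chaining_general (d cM cN : ℕ → ℕ)
    (M : ∀ i, Fin (cM i) → Matrix (Fin (d (i+1))) (Fin (d i)) ℂ)
    (N : ∀ i, Fin (cN i) → Matrix (Fin (d (i+1))) (Fin (d i)) ℂ)
    (hM : ∀ i, ∑ j, (M i j)ᴴ * M i j = 1) (hN : ∀ i, ∑ j, (N i j)ᴴ * N i j = 1)
    (Ω : Matrix (Fin (d 0)) (Fin (d 0)) ℂ)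
    (k : ℕ) :
    sSup {r | ∃ (m : ℕ) (ξ : Matrix (Fin m × Fin (d 0)) (Fin m × Fin (d 0)) ℂ),
        ξ.PosSemidef ∧ ξ.trace = 1 ∧ ptraceL ξ = Ω ∧
        r = traceNorm (iterExt m d cM M k ξ - iterExt m d cN N k ξ)}
      ≤ ∑ i ∈ Finset.range k, cdist (M i) (N i) (iterApp d cM M i Ω) := by
  refine Real.sSup_le ?_ (Finset.sum_nonneg fun i _ => cdist_nonneg _ _ _)
  rintro _ ⟨m, ξ, hξ, hξ1, rfl, rfl⟩
  exact traceNorm_iterExt_sub_le hM hN hξ hξ1 k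

theorem cdist_chaining (d cM cN : ℕ → ℕ)
    (M : ∀ i, Fin (cM i) → Matrix (Fin (d (i+1))) (Fin (d i)) ℂ)
    (N : ∀ i, Fin (cN i) → Matrix (Fin (d (i+1))) (Fin (d i)) ℂ)
    (hM : ∀ i, ∑ j, (M i j)ᴴ * M i j = 1) (hN : ∀ i, ∑ j, (N i j)ᴴ * N i j = 1)
    (Ω : Matrix (Fin (d 0)) (Fin (d 0)) ℂ) (hΩ : Ω.PosSemidef) (hΩ1 : Ω.trace = 1)
    (k : ℕ) :
    sSup {r | ∃ (m : ℕ) (ξ : Matrix (Fin m × Fin (d 0)) (Fin m × Fin (d 0)) ℂ),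
        ξ.PosSemidef ∧ ξ.trace = 1 ∧ ptraceL ξ = Ω ∧
        r = traceNorm (iterExt m d cM M k ξ - iterExt m d cN N k ξ)}
      ≤ ∑ i ∈ Finset.range k, cdist (M i) (N i) (iterApp d cM M i Ω) :=
  cdist_chaining_general d cM cN M N hM hN Ω k
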